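/- Entropic stability extends from exponential tilts to all absolutely continuous measures: let π be a probability measure on ℝ^d whose cumulant generating function χ(y) := log E_{x∼π}[exp(⟨y,x⟩)] is finite for every y ∈ ℝ^d, suppose b(T_y π) exists for every y, and suppose π is α-entropically stable, i.e. ½‖b(T_y π) − b(π)‖₂² ≤ α·KL(T_y π‖π) for all y ∈ ℝ^d. Then for every probability measure ν absolutely continuous with respect to π whose barycentre b(ν) exists, ½‖b(ν) − b(π)‖₂² ≤ α · KL(ν ‖ π). -/

import Mathlib

/-!
Applied to the tilt `T_y π`, whose relative entropy is `KL(T_y π‖π) = ⟪y, b(T_y π)⟫ - χ(y)`,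
entropic stability and `⟪y, u⟫ ≤ ‖u‖²/(2α) + α‖y‖²/2` bound the cumulant generating function:
`χ(y) ≤ ⟪y, b(π)⟫ + α‖y‖²/2`. The Donsker–Varadhan inequality `⟪y, b(ν)⟫ - χ(y) ≤ KL(ν‖π)`,
which is `KL(ν‖T_y π) ≥ 0`, at `y = (b(ν) - b(π))/α` then gives `‖b(ν) - b(π)‖²/(2α) ≤ KL(ν‖π)`.
-/

open MeasureTheory Real

/-- Real-valued Kullback-Leibler divergence `KL(ν‖ρ) = ∫ log (dν/dρ) dν`. -/
noncomputable def klReal {α : Type*} [MeasurableSpace α] (ν ρ : Measure α) : ℝ :=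
  ∫ x, Real.log ((ν.rnDeriv ρ x).toReal) ∂ν

/-- The exponential tilt `T_y μ`: the probability measure with density proportional to
`exp ⟨y, ·⟩` with respect to `μ`. -/
noncomputable def expTilt (d : ℕ) (μ : Measure (EuclideanSpace ℝ (Fin d)))
    (y : EuclideanSpace ℝ (Fin d)) : Measure (EuclideanSpace ℝ (Fin d)) :=
  μ.withDensity (fun x => ENNReal.ofReal
    (Real.exp ((inner ℝ y x : ℝ)) / ∫ x', Real.exp ((inner ℝ y x' : ℝ)) ∂μ))

/-- The barycentre `b(μ) = E_{x∼μ}[x]` of a measure. -/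
noncomputable def bary (d : ℕ) (μ : Measure (EuclideanSpace ℝ (Fin d))) :
    EuclideanSpace ℝ (Fin d) :=
  ∫ x, x ∂μ

open InformationTheory
open scoped RealInnerProductSpace

section

variable {Ω : Type*} [MeasurableSpace Ω] {μ ν : Measure Ω} {f : Ω → ℝ}

theorem integral_sub_log_integral_exp_le_integral_llr [IsProbabilityMeasure ν] [SigmaFinite μ]
    (hνμ : ν ≪ μ) (hfν : Integrable f ν) (hfμ : Integrable (fun x ↦ exp (f x)) μ)
    (hllr : Integrable (llr ν μ) ν) :
    ∫ x, f x ∂ν - log (∫ x, exp (f x) ∂μ) ≤ ∫ x, llr ν μ x ∂ν := by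
  have : NeZero μ := ⟨fun h ↦ IsProbabilityMeasure.ne_zero ν (by simpa [h] using hνμ)⟩
  have := isProbabilityMeasure_tilted hfμ
  have hgibbs := integral_llr_add_sub_measure_univ_nonneg
    (hνμ.trans (absolutelyContinuous_tilted hfμ)) (integrable_llr_tilted_right hνμ hfν hllr hfμ)
  rw [integral_llr_tilted_right hνμ hfν hfμ hllr] at hgibbs
  simp only [probReal_univ] at hgibbs
  linarith

theorem integral_llr_tilted_self [SigmaFinite μ] [NeZero μ]
    (hfμ : Integrable (fun x ↦ exp (f x)) μ) (hf : Integrable f (μ.tilted f)) :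
    ∫ x, llr (μ.tilted f) μ x ∂(μ.tilted f) =
      ∫ x, f x ∂(μ.tilted f) - log (∫ x, exp (f x) ∂μ) := by
  have := isProbabilityMeasure_tilted hfμ
  refine (integral_congr_ae ((tilted_absolutelyContinuous μ f).ae_le
    (log_rnDeriv_tilted_left_self hfμ))).trans ?_
  rw [integral_sub hf (integrable_const _)]
  simp

end

theorem real_inner_le_sq_norm_div_add_mul_sq_norm {E : Type*} [NormedAddCommGroup E]
    [InnerProductSpace ℝ E] {α : ℝ} (hα : 0 < α) (x y : E) :
    ⟪x, y⟫ ≤ ‖y‖ ^ 2 / (2 * α) + α * ‖x‖ ^ 2 / 2 := by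
  have hxy := real_inner_le_norm x y
  have hamgm : ‖x‖ * ‖y‖ ≤ ‖y‖ ^ 2 / (2 * α) + α * ‖x‖ ^ 2 / 2 := by
    rw [div_add_div _ _ (by positivity) two_ne_zero, le_div_iff₀ (by positivity)]
    nlinarith [sq_nonneg (‖y‖ - α * ‖x‖)]
  linarith

section

variable {E : Type*} [NormedAddCommGroup E] [InnerProductSpace ℝ E] [CompleteSpace E]
  [MeasurableSpace E] {μ ν : Measure E} {α : ℝ}

theorem log_integral_exp_inner_le_of_tilted_stable [SigmaFinite μ] [NeZero μ] (hα : 0 < α) (y : E)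
    (hexp : Integrable (fun x ↦ exp ⟪y, x⟫) μ)
    (hmean : Integrable (fun x ↦ x) (μ.tilted (fun x ↦ ⟪y, x⟫)))
    (hstable : (1 / 2) * ‖∫ x, x ∂(μ.tilted (fun x ↦ ⟪y, x⟫)) - ∫ x, x ∂μ‖ ^ 2 ≤
      α * ∫ x, llr (μ.tilted (fun x ↦ ⟪y, x⟫)) μ x ∂(μ.tilted (fun x ↦ ⟪y, x⟫))) :
    log (∫ x, exp ⟪y, x⟫ ∂μ) ≤ ⟪y, ∫ x, x ∂μ⟫ + α * ‖y‖ ^ 2 / 2 := by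
  rw [integral_llr_tilted_self hexp (hmean.const_inner y), integral_inner hmean] at hstable
  set u := ∫ x, x ∂(μ.tilted (fun x ↦ ⟪y, x⟫)) - ∫ x, x ∂μ
  have hinner := real_inner_le_sq_norm_div_add_mul_sq_norm hα y u
  have hu : ‖u‖ ^ 2 / (2 * α) ≤
      ⟪y, ∫ x, x ∂(μ.tilted (fun x ↦ ⟪y, x⟫))⟫ - log (∫ x, exp ⟪y, x⟫ ∂μ) := by
    rw [div_le_iff₀ (by positivity)]; linarith
  rw [inner_sub_right] at hinner
  linarith

theorem half_sq_norm_integral_sub_le_mul_integral_llr [IsProbabilityMeasure ν] [SigmaFinite μ]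
    (hα : 0 < α) (hνμ : ν ≪ μ) (hmean : Integrable (fun x ↦ x) ν) (hllr : Integrable (llr ν μ) ν)
    (hexp : ∀ y, Integrable (fun x ↦ exp ⟪y, x⟫) μ)
    (hcgf : ∀ y, log (∫ x, exp ⟪y, x⟫ ∂μ) ≤ ⟪y, ∫ x, x ∂μ⟫ + α * ‖y‖ ^ 2 / 2) :
    (1 / 2) * ‖∫ x, x ∂ν - ∫ x, x ∂μ‖ ^ 2 ≤ α * ∫ x, llr ν μ x ∂ν := by
  set v := ∫ x, x ∂ν - ∫ x, x ∂μ
  set y := α⁻¹ • v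
  have hdv := integral_sub_log_integral_exp_le_integral_llr hνμ (hmean.const_inner y) (hexp y) hllr
  rw [integral_inner hmean] at hdv
  have hyv : ⟪y, ∫ x, x ∂ν⟫ - ⟪y, ∫ x, x ∂μ⟫ - α * ‖y‖ ^ 2 / 2 = ‖v‖ ^ 2 / (2 * α) := by
    rw [← inner_sub_right, real_inner_smul_left, real_inner_self_eq_norm_sq, norm_smul,
      Real.norm_of_nonneg (inv_nonneg.mpr hα.le)]
    field_simp
    ring
  have hχ := hcgf y
  have hkl : ‖v‖ ^ 2 / (2 * α) ≤ ∫ x, llr ν μ x ∂ν := by linarith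
  rw [div_le_iff₀ (by positivity)] at hkl
  linarith

end

/-- **Entropic stability extends from exponential tilts to all absolutely continuous
measures.**  Let `μ` be a probability measure on `ℝ^d` whose cumulant generating
function is finite everywhere, whose tilts all have barycentres, and which is
`α`-entropically stable:  `½‖b(T_y μ) - b(μ)‖² ≤ α·KL(T_y μ‖μ)` for every `y`.
Then for every probability measure `ν ≪ μ` with a barycentre (and finite relative
entropy), `½‖b(ν) - b(μ)‖² ≤ α · KL(ν‖μ)`. -/
theorem entropic_stability_extends (d : ℕ)
    (μ : Measure (EuclideanSpace ℝ (Fin d))) [IsProbabilityMeasure μ]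
    (hcgf : ∀ y : EuclideanSpace ℝ (Fin d),
      Integrable (fun x => Real.exp ((inner ℝ y x : ℝ))) μ)
    (hbar : ∀ y : EuclideanSpace ℝ (Fin d), Integrable (fun x => x) (expTilt d μ y))
    (α : ℝ) (hα : 0 < α)
    (hstable : ∀ y : EuclideanSpace ℝ (Fin d),
      (1 / 2) * ‖bary d (expTilt d μ y) - bary d μ‖ ^ 2 ≤
        α * klReal (expTilt d μ y) μ) :
    ∀ ν : Measure (EuclideanSpace ℝ (Fin d)), IsProbabilityMeasure ν → ν ≪ μ →
      Integrable (fun x => x) ν →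
      Integrable (fun x => Real.log ((ν.rnDeriv μ x).toReal)) ν →
      (1 / 2) * ‖bary d ν - bary d μ‖ ^ 2 ≤ α * klReal ν μ := by
  intro ν _ hνμ hmean hllr
  exact half_sq_norm_integral_sub_le_mul_integral_llr hα hνμ hmean hllr hcgf
    fun y ↦ log_integral_exp_inner_le_of_tilted_stable hα y (hcgf y) (hbar y) (hstable y)
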